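/- Let X be a smooth manifold without boundary, let M ⊂ X be an open and connected subset, and let f₁, f₂ : M → ℝ be locally Lipschitz (in charts). If the gradients of f₁ and f₂ (computed in charts, at points where both exist) coincide on a set that has full Lebesgue measure in charts of M, then f₁ − f₂ is constant on M. -/

import Mathlib

/-!
In a chart around a point of `M`, the difference `f₁ - f₂` is Lipschitz on a ball and has zero
derivative almost everywhere there: a zero derivative in the chart at a point of `A` transfers to
any other chart by the chain rule, coordinate changes being differentiable. By Fubini, almost every
translate of a segment in the ball meets the exceptional null set in a null set of parameters;
along such a segment the difference is absolutely continuous with a.e. vanishing derivative, hence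
takes the same value at both endpoints, and continuity extends this to every segment. So
`f₁ - f₂` is locally constant on `M`, hence constant because `M` is connected.
-/

open MeasureTheory Filter Set Topology
open scoped ENNReal NNReal Manifold

noncomputable section

/-- The model space: `d`-dimensional Euclidean space. -/
abbrev Em (d : ℕ) := EuclideanSpace ℝ (Fin d)

section Euclidean

variable {E F : Type*} [NormedAddCommGroup E] [NormedSpace ℝ E]
  [NormedAddCommGroup F] [NormedSpace ℝ F]

theorem LipschitzOnWith.eq_of_ae_hasFDerivAt_zero_on_segment {g : E → F} {K : ℝ≥0} {U : Set E}
    (hg : LipschitzOnWith K g U) {w v : E} (hseg : ∀ t ∈ Icc (0 : ℝ) 1, w + t • v ∈ U)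
    (hder : ∀ᵐ t : ℝ, t ∈ Icc (0 : ℝ) 1 → HasFDerivAt g (0 : E →L[ℝ] F) (w + t • v)) :
    g (w + v) = g w := by
  obtain ⟨K', hline⟩ : ∃ K', LipschitzWith K' fun t : ℝ => w + t • v :=
    ⟨_, (LipschitzWith.const w).add (ContinuousLinearMap.toSpanSingleton ℝ v).lipschitz⟩
  have hlip : LipschitzOnWith (K * K') (fun t : ℝ => g (w + t • v)) (uIcc 0 1) := by
    rw [uIcc_of_le zero_le_one]
    exact hg.comp hline.lipschitzOnWith hseg
  obtain ⟨C, hC⟩ := hlip.absolutelyContinuousOnInterval.const_of_ae_hasDerivAt_zero <| by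
    filter_upwards [hder] with t ht ht01
    rw [uIcc_of_le zero_le_one] at ht01
    simpa [Function.comp_def] using
      (ht ht01).comp_hasDerivAt t (((hasDerivAt_id t).smul_const v).const_add w)
  simpa using (hC 1 right_mem_uIcc).trans (hC 0 left_mem_uIcc).symm

theorem ae_ae_add_smul_notMem [MeasurableSpace E] [BorelSpace E] [SecondCountableTopology E]
    (μ : Measure E) [SFinite μ] [μ.IsAddRightInvariant] {N : Set E} (hN : μ N = 0) (v : E) :
    ∀ᵐ w ∂μ, ∀ᵐ t : ℝ, w + t • v ∉ N := by
  set N' := toMeasurable μ N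
  have hmeas : MeasurableSet {p : E × ℝ | p.1 + p.2 • v ∉ N'} :=
    ((measurableSet_toMeasurable μ N).preimage (by fun_prop)).compl
  have hslice : ∀ t : ℝ, ∀ᵐ w ∂μ, w + t • v ∉ N' := fun t => by
    rw [ae_iff]
    simp only [not_not]
    exact (measure_preimage_add_right μ (t • v) N').trans (measure_toMeasurable N ▸ hN)
  filter_upwards [(Measure.ae_ae_comm (μ := μ) (ν := volume) hmeas).2 (ae_of_all _ hslice)]
    with w hw
  filter_upwards [hw] with t ht h
  exact ht (subset_toMeasurable μ N h)

theorem LipschitzOnWith.eq_of_ae_hasFDerivAt_zero [FiniteDimensional ℝ E] [MeasurableSpace E]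
    [BorelSpace E] {μ : Measure E} [μ.IsAddHaarMeasure] {g : E → F} {K : ℝ≥0} {U : Set E}
    (hg : LipschitzOnWith K g U) (hUc : Convex ℝ U) (hUo : IsOpen U)
    (hder : ∀ᵐ z ∂μ, z ∈ U → HasFDerivAt g (0 : E →L[ℝ] F) z) {x y : E} (hx : x ∈ U)
    (hy : y ∈ U) : g x = g y := by
  set v := y - x
  set U' := U ∩ (· + v) ⁻¹' U
  have hU'o : IsOpen U' := hUo.inter (hUo.preimage (continuous_add_const v))
  have hN : μ {z | ¬(z ∈ U → HasFDerivAt g (0 : E →L[ℝ] F) z)} = 0 := ae_iff.1 hder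
  have heq : EqOn (fun w => g (w + v)) g U' := by
    refine Measure.eqOn_open_of_ae_eq (μ := μ) ?_ hU'o
      (hg.continuousOn.comp (continuous_add_const v).continuousOn fun w hw => hw.2)
      (hg.continuousOn.mono inter_subset_left)
    rw [EventuallyEq, ae_restrict_iff' hU'o.measurableSet]
    filter_upwards [ae_ae_add_smul_notMem μ hN v] with w hw hwU'
    have hseg : ∀ t ∈ Icc (0 : ℝ) 1, w + t • v ∈ U := fun t ht => hUc.add_smul_mem hwU'.1 hwU'.2 ht
    refine hg.eq_of_ae_hasFDerivAt_zero_on_segment hseg ?_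
    filter_upwards [hw] with t ht ht01
    simpa [hseg t ht01] using ht
  simpa [v] using (heq (show x ∈ U' from ⟨hx, by simpa [v] using hy⟩)).symm

end Euclidean

section Charts

variable {E F X : Type*} [NormedAddCommGroup E] [NormedSpace ℝ E]
  [NormedAddCommGroup F] [NormedSpace ℝ F] [TopologicalSpace X] [ChartedSpace E X]

theorem eventually_eq_of_lipschitzOnWith_chartAt [FiniteDimensional ℝ E] [MeasurableSpace E]
    [BorelSpace E] {μ : Measure E} [μ.IsAddHaarMeasure] {h : X → F} {p : X} {U : Set E}
    (hU : U ∈ 𝓝 (chartAt E p p)) {K : ℝ≥0} (hLip : LipschitzOnWith K (h ∘ (chartAt E p).symm) U)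
    (hder : ∀ᵐ z ∂μ, z ∈ U → HasFDerivAt (h ∘ (chartAt E p).symm) (0 : E →L[ℝ] F) z) :
    ∀ᶠ q in 𝓝 p, h q = h p := by
  set φ := chartAt E p
  obtain ⟨r, hr, hrU⟩ := Metric.mem_nhds_iff.1 hU
  have hconst : ∀ z ∈ Metric.ball (φ p) r, h (φ.symm z) = h (φ.symm (φ p)) := fun z hz =>
    (hLip.mono hrU).eq_of_ae_hasFDerivAt_zero (convex_ball _ r) Metric.isOpen_ball
      (hder.mono fun z hz hzB => hz (hrU hzB)) hz (Metric.mem_ball_self hr)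
  filter_upwards [φ.open_source.mem_nhds (mem_chart_source E p),
    (φ.continuousAt (mem_chart_source E p)).eventually (Metric.ball_mem_nhds _ hr)] with q hq hqB
  simpa [φ.left_inv hq, φ.left_inv (mem_chart_source E p)] using hconst _ hqB

theorem HasFDerivAt.comp_chartAt_symm_of_eq_zero [IsManifold 𝓘(ℝ, E) 1 X] {f : X → F} {x y : X}
    (hy : y ∈ (chartAt E x).source)
    (hf : HasFDerivAt (f ∘ (chartAt E y).symm) (0 : E →L[ℝ] F) (chartAt E y y)) :
    HasFDerivAt (f ∘ (chartAt E x).symm) (0 : E →L[ℝ] F) (chartAt E x y) := by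
  set φ := chartAt E x
  set ψ := chartAt E y
  have hz : φ y ∈ ((extChartAt 𝓘(ℝ, E) x).symm ≫ extChartAt 𝓘(ℝ, E) y).source := by
    simp [φ, hy, mem_chart_source]
  have hc : HasFDerivAt (ψ ∘ φ.symm) (fderiv ℝ (ψ ∘ φ.symm) (φ y)) (φ y) := by
    have := contDiffWithinAt_ext_coord_change (I := 𝓘(ℝ, E)) (n := 1) y x hz
    simp only [mfld_simps, contDiffWithinAt_univ] at this
    exact (this.differentiableAt one_ne_zero).hasFDerivAt
  have hf' : HasFDerivAt (f ∘ ψ.symm) (0 : E →L[ℝ] F) ((ψ ∘ φ.symm) (φ y)) := by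
    simpa [φ.left_inv hy] using hf
  have hψ : ∀ᶠ z in 𝓝 (φ y), φ.symm z ∈ ψ.source :=
    (φ.continuousAt_symm (φ.map_source hy)).preimage_mem_nhds
      (ψ.open_source.mem_nhds (by rw [φ.left_inv hy]; exact mem_chart_source E y))
  simpa using (hf'.comp (φ y) hc).congr_of_eventuallyEq <| hψ.mono fun z hz => by
    simp [ψ.left_inv hz]

end Charts

theorem stmt19_general {d : ℕ} {X : Type*} [TopologicalSpace X]
    [ChartedSpace (Em d) X] [IsManifold (𝓡 d) (⊤ : ℕ∞) X]
    (M : Set X) (hMopen : IsOpen M) (hMconn : IsPreconnected M)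
    (f₁ f₂ : X → ℝ)
    -- `f₁` and `f₂` are locally Lipschitz on `M` (in charts)
    (hLip₁ : ∀ x ∈ M, ∃ V : Set (Em d), V ∈ nhds (chartAt (Em d) x x) ∧
      ∃ L : ℝ≥0, LipschitzOnWith L (fun v => f₁ ((chartAt (Em d) x).symm v))
        (V ∩ (chartAt (Em d) x) '' ((chartAt (Em d) x).source ∩ M)))
    (hLip₂ : ∀ x ∈ M, ∃ V : Set (Em d), V ∈ nhds (chartAt (Em d) x x) ∧
      ∃ L : ℝ≥0, LipschitzOnWith L (fun v => f₂ ((chartAt (Em d) x).symm v))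
        (V ∩ (chartAt (Em d) x) '' ((chartAt (Em d) x).source ∩ M)))
    -- a set `A` of full Lebesgue measure in charts of `M` on which the
    -- gradients of `f₁` and `f₂` (in charts) exist and coincide
    (A : Set X)
    (hAfull : ∀ x ∈ M, volume ((chartAt (Em d) x) ''
      (((chartAt (Em d) x).source ∩ M) \ A)) = 0)
    (hgrad : ∀ x ∈ A, ∃ D : Em d →L[ℝ] ℝ,
      HasFDerivWithinAt (fun v => f₁ ((chartAt (Em d) x).symm v)) D
        ((chartAt (Em d) x) '' ((chartAt (Em d) x).source ∩ M)) (chartAt (Em d) x x) ∧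
      HasFDerivWithinAt (fun v => f₂ ((chartAt (Em d) x).symm v)) D
        ((chartAt (Em d) x) '' ((chartAt (Em d) x).source ∩ M)) (chartAt (Em d) x x)) :
    ∃ a : ℝ, ∀ x ∈ M, f₁ x = f₂ x + a := by
  have hloc : ∀ p ∈ M, ∀ᶠ q in 𝓝 p, f₁ q - f₂ q = f₁ p - f₂ p := by
    intro p hp
    set φ := chartAt (Em d) p
    obtain ⟨V₁, hV₁, L₁, hL₁⟩ := hLip₁ p hp
    obtain ⟨V₂, hV₂, L₂, hL₂⟩ := hLip₂ p hp
    have hO : φ '' (φ.source ∩ M) ∈ 𝓝 (φ p) :=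
      (φ.isOpen_image_source_inter hMopen).mem_nhds ⟨p, ⟨mem_chart_source _ p, hp⟩, rfl⟩
    refine eventually_eq_of_lipschitzOnWith_chartAt (μ := volume)
      (inter_mem (inter_mem hV₁ hV₂) hO) ((hL₁.mono ?_).sub (hL₂.mono ?_)) ?_
    · exact fun z hz => ⟨hz.1.1, hz.2⟩
    · exact fun z hz => ⟨hz.1.2, hz.2⟩
    filter_upwards [measure_eq_zero_iff_ae_notMem.1 (hAfull p hp)] with z hzA hzU
    obtain ⟨y, ⟨hys, hyM⟩, rfl⟩ := hzU.2
    have hyA : y ∈ A := by_contra fun hyA => hzA ⟨y, ⟨⟨hys, hyM⟩, hyA⟩, rfl⟩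
    obtain ⟨D, h₁, h₂⟩ := hgrad y hyA
    refine HasFDerivAt.comp_chartAt_symm_of_eq_zero hys ?_
    have hOy := (chartAt (Em d) y).isOpen_image_source_inter hMopen
    simpa [Function.comp_def] using (h₁.fun_sub h₂).hasFDerivAt
      (hOy.mem_nhds ⟨y, ⟨mem_chart_source _ y, hyM⟩, rfl⟩)
  rcases M.eq_empty_or_nonempty with rfl | ⟨x₀, hx₀⟩
  · exact ⟨0, fun x hx => hx.elim⟩
  refine ⟨f₁ x₀ - f₂ x₀, fun x hx => ?_⟩
  have := hMconn.induction₂ (fun x y => f₁ x - f₂ x = f₁ y - f₂ y)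
    (fun x hx => nhdsWithin_le_nhds ((hloc x hx).mono fun _ => Eq.symm))
    (fun _ _ _ _ _ _ => Eq.trans) (fun _ _ _ _ => Eq.symm) hx hx₀
  linarith

/-- Locally Lipschitz functions on an open connected subset of
a smooth manifold whose gradients (in charts) coincide on a set of full Lebesgue
measure in charts differ by a constant. -/
theorem stmt19 {d : ℕ} {X : Type*} [TopologicalSpace X]
    [ChartedSpace (Em d) X] [IsManifold (𝓡 d) (⊤ : ℕ∞) X]
    (M : Set X) (hMopen : IsOpen M) (hMconn : IsPreconnected M)
    (f₁ f₂ : X → ℝ)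
    -- `f₁` and `f₂` are locally Lipschitz on `M` (in charts)
    (hLip₁ : ∀ x ∈ M, ∃ V : Set (Em d), V ∈ nhds (chartAt (Em d) x x) ∧
      ∃ L : ℝ≥0, LipschitzOnWith L (fun v => f₁ ((chartAt (Em d) x).symm v))
        (V ∩ (chartAt (Em d) x) '' ((chartAt (Em d) x).source ∩ M)))
    (hLip₂ : ∀ x ∈ M, ∃ V : Set (Em d), V ∈ nhds (chartAt (Em d) x x) ∧
      ∃ L : ℝ≥0, LipschitzOnWith L (fun v => f₂ ((chartAt (Em d) x).symm v))
        (V ∩ (chartAt (Em d) x) '' ((chartAt (Em d) x).source ∩ M)))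
    -- a set `A` of full Lebesgue measure in charts of `M` on which the
    -- gradients of `f₁` and `f₂` (in charts) exist and coincide
    (A : Set X) (hAM : A ⊆ M)
    (hAfull : ∀ x ∈ M, volume ((chartAt (Em d) x) ''
      (((chartAt (Em d) x).source ∩ M) \ A)) = 0)
    (hgrad : ∀ x ∈ A, ∃ D : Em d →L[ℝ] ℝ,
      HasFDerivWithinAt (fun v => f₁ ((chartAt (Em d) x).symm v)) D
        ((chartAt (Em d) x) '' ((chartAt (Em d) x).source ∩ M)) (chartAt (Em d) x x) ∧
      HasFDerivWithinAt (fun v => f₂ ((chartAt (Em d) x).symm v)) D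
        ((chartAt (Em d) x) '' ((chartAt (Em d) x).source ∩ M)) (chartAt (Em d) x x)) :
    ∃ a : ℝ, ∀ x ∈ M, f₁ x = f₂ x + a :=
  stmt19_general M hMopen hMconn f₁ f₂ hLip₁ hLip₂ A hAfull hgrad
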